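/- Let (X,d,μ) and (Y,d_Y,ν) be metric measure spaces, let Ω ⊂ X be open, and let f : Ω → Y be continuous. Suppose E = E₁ ∪ E₂ is a subset of Ω such that E₁ is at most countable and E₂ has σ-finite Ĥ-measure. Then Mod₁({ curves γ in Ω : H¹(f(γ ∩ E)) > 0 }) = 0, where γ ∩ E denotes the intersection of the image of γ with E. -/

import Mathlib

open MeasureTheory Metric Set Filter ENNReal Topology

noncomputable section

/-- A curve parametrized by arc length: a `1`-Lipschitz map `γ : [0, len] → X` such that
the length (total variation) of `γ` restricted to `[0, t]` equals `t` for every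
`t ∈ [0, len]`. -/
structure Curve (X : Type*) [PseudoMetricSpace X] where
  len : ℝ
  len_nonneg : 0 ≤ len
  toFun : ℝ → X
  lip : LipschitzOnWith 1 toFun (Set.Icc 0 len)
  arc : ∀ t ∈ Set.Icc (0 : ℝ) len, eVariationOn toFun (Set.Icc 0 t) = ENNReal.ofReal t

namespace Curve

variable {X : Type*} [PseudoMetricSpace X]

/-- The image of a curve. -/
def image (γ : Curve X) : Set X :=
  γ.toFun '' Set.Icc 0 γ.len

/-- A curve lies in a set `H` if its image is contained in `H`. -/
def In (γ : Curve X) (H : Set X) : Prop :=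
  γ.image ⊆ H

/-- The curve integral `∫_γ g ds := ∫_0^{ℓ_γ} g(γ(s)) ds`. -/
def integral (γ : Curve X) (g : X → ℝ≥0∞) : ℝ≥0∞ :=
  ∫⁻ s in Set.Icc (0 : ℝ) γ.len, g (γ.toFun s)

end Curve

section BasicDefs

variable {X Y : Type*} [PseudoMetricSpace X] [PseudoMetricSpace Y]

/-- `L_f(x,r) := sup { d_Y(f y, f x) : y ∈ Ω, d(y,x) ≤ r }`. -/
def Lf (Ω : Set X) (f : X → Y) (x : X) (r : ℝ) : ℝ≥0∞ :=
  ⨆ (y : X) (_ : y ∈ Ω ∧ dist y x ≤ r), edist (f y) (f x)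

/-- `l_f(x,r) := inf { d_Y(f y, f x) : y ∈ Ω, d(y,x) ≥ r }`. -/
def lf (Ω : Set X) (f : X → Y) (x : X) (r : ℝ) : ℝ≥0∞ :=
  ⨅ (y : X) (_ : y ∈ Ω ∧ r ≤ dist y x), edist (f y) (f x)

/-- `H_f(x,r) := L_f(x,r)/l_f(x,r)`, interpreted as `∞` when `l_f(x,r) = 0`. -/
def Hfq (Ω : Set X) (f : X → Y) (x : X) (r : ℝ) : ℝ≥0∞ :=
  if lf Ω f x r = 0 then ⊤ else Lf Ω f x r / lf Ω f x r

/-- `h_f(x) := liminf_{r → 0} H_f(x,r)`. -/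
def hfq (Ω : Set X) (f : X → Y) (x : X) : ℝ≥0∞ :=
  Filter.liminf (fun r : ℝ => Hfq Ω f x r) (nhdsWithin (0 : ℝ) (Set.Ioi 0))

/-- `h_f^∨(x) := max {h_f(x), 1}`. -/
def hfVee (Ω : Set X) (f : X → Y) (x : X) : ℝ≥0∞ :=
  max (hfq Ω f x) 1

/-- `(A,d)` is metric doubling with constant `M`: every ball in `A` can be covered by
`M` balls of half the radius (balls in `A` taken with respect to the induced metric). -/
def MetricDoublingOn (A : Set X) (M : ℕ) : Prop :=
  ∀ x ∈ A, ∀ r : ℝ, 0 < r → ∃ s : Finset X, ↑s ⊆ A ∧ s.card ≤ M ∧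
    A ∩ ball x r ⊆ ⋃ y ∈ s, ball y (r / 2)

end BasicDefs

section MeasureDefs

variable {X Y : Type*} [PseudoMetricSpace X] [MeasurableSpace X] [PseudoMetricSpace Y]

/-- The measure is finite on balls. -/
def FiniteOnBalls (μ : Measure X) : Prop :=
  ∀ (x : X) (r : ℝ), μ (ball x r) < ⊤

/-- `μ` is asymptotically doubling in `A`. -/
def AsympDoublingOn (μ : Measure X) (A : Set X) : Prop :=
  ∃ C : ℝ≥0∞, 1 < C ∧ ∀ x ∈ A,
    Filter.limsup (fun r : ℝ => μ (ball x (2 * r)) / μ (ball x r))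
      (nhdsWithin (0 : ℝ) (Set.Ioi 0)) < C

/-- The restricted doubled Hausdorff content of codimension 1:
`Ĥ_R(A) := inf { Σ_j μ(B(x_j, 2 r_j))/r_j : A ⊆ ⋃_j B(x_j, r_j), r_j ≤ R }`. -/
def hatHContent (μ : Measure X) (R : ℝ) (A : Set X) : ℝ≥0∞ :=
  ⨅ (c : ℕ → X) (r : ℕ → ℝ)
    (_ : (∀ j, r j ≤ R) ∧ A ⊆ ⋃ j, ball (c j) (r j)),
    ∑' j, μ (ball (c j) (2 * r j)) / ENNReal.ofReal (r j)

/-- The doubled codimension 1 Hausdorff measure `Ĥ(A) := lim_{R → 0} Ĥ_R(A)`. -/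
def hatH (μ : Measure X) (A : Set X) : ℝ≥0∞ :=
  ⨆ (R : ℝ) (_ : 0 < R), hatHContent μ R A

/-- A set `A` is σ-finite with respect to a set function `m`. -/
def SigmaFiniteSet (m : Set X → ℝ≥0∞) (A : Set X) : Prop :=
  ∃ E : ℕ → Set X, A ⊆ ⋃ i, E i ∧ ∀ i, m (E i) < ⊤

/-- Ahlfors `Q`-regularity with constant `C`. -/
def AhlforsRegular (μ : Measure X) (Q : ℝ) (C : ℝ≥0∞) : Prop :=
  1 ≤ C ∧ ∀ (x : X) (r : ℝ), 0 < r → ENNReal.ofReal r < EMetric.diam (Set.univ : Set X) →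
    C⁻¹ * ENNReal.ofReal r ^ Q ≤ μ (ball x r) ∧ μ (ball x r) ≤ C * ENNReal.ofReal r ^ Q

/-- The 1-modulus of a curve family. -/
def Mod1 (μ : Measure X) (Γ : Set (Curve X)) : ℝ≥0∞ :=
  ⨅ (ρ : X → ℝ≥0∞) (_ : Measurable ρ) (_ : ∀ γ ∈ Γ, 1 ≤ γ.integral ρ),
    ∫⁻ x, ρ x ∂μ

/-- The AM-modulus of a curve family. -/
def AMmod (μ : Measure X) (Γ : Set (Curve X)) : ℝ≥0∞ :=
  ⨅ (ρ : ℕ → X → ℝ≥0∞) (_ : ∀ i, Measurable (ρ i))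
    (_ : ∀ γ ∈ Γ, 1 ≤ Filter.liminf (fun i => γ.integral (ρ i)) Filter.atTop),
    Filter.liminf (fun i => ∫⁻ x, ρ i x ∂μ) Filter.atTop

/-- `g` is a 1-weak upper gradient of `f` in `H`: the upper gradient inequality holds
for 1-a.e. curve in `H`. -/
def IsWeakUpperGradientOn (μ : Measure X) (H : Set X) (f : X → Y) (g : X → ℝ≥0∞) : Prop :=
  Mod1 μ {γ : Curve X | γ.In H ∧
    ¬ edist (f (γ.toFun 0)) (f (γ.toFun γ.len)) ≤ γ.integral g} = 0

/-- The Dirichlet class `D¹(H; Y)`: `f` has a 1-weak upper gradient in `L¹(H, μ)`. -/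
def MemDirichlet (μ : Measure X) (H : Set X) (f : X → Y) : Prop :=
  ∃ g : X → ℝ≥0∞, Measurable g ∧ IsWeakUpperGradientOn μ H f g ∧ ∫⁻ x in H, g x ∂μ < ⊤

/-- The class `D^{BV}(Ω; Y)`. -/
def MemDBV (μ : Measure X) (Ω : Set X) (f : X → Y) : Prop :=
  ∃ g : ℕ → X → ℝ≥0∞, (∀ i, Measurable (g i)) ∧
    (∃ C : ℝ≥0∞, C < ⊤ ∧ ∀ i, ∫⁻ x in Ω, g i x ∂μ ≤ C) ∧
    AMmod μ {γ : Curve X | γ.In Ω ∧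
      ¬ edist (f (γ.toFun 0)) (f (γ.toFun γ.len)) ≤
        Filter.liminf (fun i => γ.integral (g i)) Filter.atTop} = 0

end MeasureDefs

section Aux

variable {X : Type*} [MetricSpace X] [MeasurableSpace X] [BorelSpace X] {μ : Measure X}

lemma Mod1_le_of_admissible {Γ : Set (Curve X)} {ρ : X → ℝ≥0∞}
    (hm : Measurable ρ) (hadm : ∀ γ ∈ Γ, 1 ≤ γ.integral ρ) :
    Mod1 μ Γ ≤ ∫⁻ x, ρ x ∂μ :=
  iInf_le_of_le ρ (iInf_le_of_le hm (iInf_le_of_le hadm le_rfl))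

lemma Mod1_eq_zero_of_le_forall {Γ : Set (Curve X)}
    (h : ∀ ε : ℝ≥0∞, 0 < ε → Mod1 μ Γ ≤ ε) : Mod1 μ Γ = 0 := by
  refine le_antisymm ?_ zero_le
  refine ENNReal.le_of_forall_pos_le_add fun ε hε _ => ?_
  simpa using h ε (by exact_mod_cast hε)

lemma exists_admissible_of_Mod1_zero {Γ : Set (Curve X)} (h : Mod1 μ Γ = 0)
    {ε : ℝ≥0∞} (hε : 0 < ε) :
    ∃ ρ : X → ℝ≥0∞, Measurable ρ ∧ (∀ γ ∈ Γ, 1 ≤ γ.integral ρ) ∧ ∫⁻ x, ρ x ∂μ < ε := by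
  have h2 : Mod1 μ Γ < ε := h ▸ hε
  rw [Mod1, iInf_lt_iff] at h2; obtain ⟨ρ, hρ⟩ := h2
  rw [iInf_lt_iff] at hρ; obtain ⟨hm, hρ⟩ := hρ
  rw [iInf_lt_iff] at hρ; obtain ⟨hadm, hρ⟩ := hρ
  exact ⟨ρ, hm, hadm, hρ⟩

lemma Mod1_zero_of_subset_iUnion {ι : Type*} [Countable ι] {Γ : Set (Curve X)}
    {Γi : ι → Set (Curve X)} (hsub : Γ ⊆ ⋃ i, Γi i) (hz : ∀ i, Mod1 μ (Γi i) = 0) :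
    Mod1 μ Γ = 0 := by
  refine Mod1_eq_zero_of_le_forall fun ε hε => ?_
  obtain ⟨δ, hδpos, hδsum⟩ := ENNReal.exists_pos_sum_of_countable' hε.ne' ι
  choose ρ hm hadm hint using fun i => exists_admissible_of_Mod1_zero (hz i) (hδpos i)
  refine le_trans (Mod1_le_of_admissible (ρ := fun x => ∑' i, ρ i x)
    (Measurable.ennreal_tsum hm) ?_) ?_
  · intro γ hγ
    obtain ⟨i, hi⟩ : ∃ i, γ ∈ Γi i := by simpa using hsub hγ
    calc (1:ℝ≥0∞) ≤ γ.integral (ρ i) := hadm i γ hi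
    _ ≤ γ.integral (fun x => ∑' i, ρ i x) := lintegral_mono fun s => ENNReal.le_tsum i
  · calc ∫⁻ x, ∑' i, ρ i x ∂μ = ∑' i, ∫⁻ x, ρ i x ∂μ :=
        lintegral_tsum fun i => (hm i).aemeasurable
    _ ≤ ∑' i, δ i := ENNReal.tsum_le_tsum fun i => (hint i).le
    _ ≤ ε := hδsum.le

lemma hatHContent_mono {R : ℝ} {A B : Set X} (h : A ⊆ B) :
    hatHContent μ R A ≤ hatHContent μ R B := by
  refine le_iInf fun c => le_iInf fun r => le_iInf fun hcr => ?_
  exact iInf_le_of_le c (iInf_le_of_le r (iInf_le_of_le ⟨hcr.1, h.trans hcr.2⟩ le_rfl))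

lemma hatHContent_anti {R R' : ℝ} (hR : R ≤ R') {A : Set X} :
    hatHContent μ R' A ≤ hatHContent μ R A := by
  refine le_iInf fun c => le_iInf fun r => le_iInf fun hcr => ?_
  exact iInf_le_of_le c (iInf_le_of_le r
    (iInf_le_of_le ⟨fun j => (hcr.1 j).trans hR, hcr.2⟩ le_rfl))

lemma hatH_mono {A B : Set X} (h : A ⊆ B) : hatH μ A ≤ hatH μ B :=
  iSup_mono fun R => iSup_mono fun _ => hatHContent_mono h

lemma hatHContent_le_hatH {R : ℝ} (hR : 0 < R) {A : Set X} :
    hatHContent μ R A ≤ hatH μ A :=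
  le_iSup₂ (f := fun (R : ℝ) (_ : 0 < R) => hatHContent μ R A) R hR

lemma exists_cover_of_hatHContent_lt {R : ℝ} {A : Set X} {x : ℝ≥0∞}
    (h : hatHContent μ R A < x) :
    ∃ (c : ℕ → X) (r : ℕ → ℝ), (∀ j, r j ≤ R) ∧ (A ⊆ ⋃ j, ball (c j) (r j)) ∧
      ∑' j, μ (ball (c j) (2 * r j)) / ENNReal.ofReal (r j) < x := by
  rw [hatHContent, iInf_lt_iff] at h; obtain ⟨c, h⟩ := h
  rw [iInf_lt_iff] at h; obtain ⟨r, h⟩ := h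
  rw [iInf_lt_iff] at h; obtain ⟨⟨h1, h2⟩, h⟩ := h
  exact ⟨c, r, h1, h2, h⟩

end Aux
section Aux2
set_option linter.unusedSectionVars false
set_option maxHeartbeats 1000000
variable {X : Type*} [MetricSpace X] [MeasurableSpace X] [BorelSpace X] {μ : Measure X}

lemma hatH_superadd {A B : Set X} {Δ : ℝ} (hΔ : 0 < Δ)
    (hsep : ∀ a ∈ A, ∀ b ∈ B, Δ ≤ dist a b) :
    hatH μ A + hatH μ B ≤ hatH μ (A ∪ B) := by
  classical
  have key : ∀ R : ℝ, 0 < R → 2 * R ≤ Δ →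
      hatHContent μ R A + hatHContent μ R B ≤ hatHContent μ R (A ∪ B) := by
    intro R hR hRΔ
    refine le_iInf fun c => le_iInf fun r => le_iInf fun hcr => ?_
    obtain ⟨hrR, hcov⟩ := hcr
    have hcont : ∀ S : Set X, S ⊆ ⋃ j, ball (c j) (r j) →
        hatHContent μ R S ≤
        ∑' j, μ (ball (c j) (2 * (if (ball (c j) (r j) ∩ S).Nonempty then r j else 0))) /
          ENNReal.ofReal (if (ball (c j) (r j) ∩ S).Nonempty then r j else 0) := by
      intro S hcovS
      refine iInf_le_of_le c (iInf_le_of_le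
        (fun j => if (ball (c j) (r j) ∩ S).Nonempty then r j else 0)
        (iInf_le_of_le ⟨fun j => ?_, fun x hx => ?_⟩ le_rfl))
      · simp only []
        split
        · exact hrR j
        · exact hR.le
      · obtain ⟨j, hj⟩ := mem_iUnion.1 (hcovS hx)
        refine mem_iUnion.2 ⟨j, ?_⟩
        simp only [if_pos (Set.nonempty_of_mem (Set.mem_inter hj hx))]
        exact hj
    have hzero : ∀ j, μ (ball (c j) (2 * (0:ℝ))) / ENNReal.ofReal (0:ℝ) = 0 := by
      intro j; simp [mul_zero, Metric.ball_zero]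
    have hterm : ∀ j,
        μ (ball (c j) (2 * (if (ball (c j) (r j) ∩ A).Nonempty then r j else 0))) /
          ENNReal.ofReal (if (ball (c j) (r j) ∩ A).Nonempty then r j else 0)
        + μ (ball (c j) (2 * (if (ball (c j) (r j) ∩ B).Nonempty then r j else 0))) /
          ENNReal.ofReal (if (ball (c j) (r j) ∩ B).Nonempty then r j else 0)
        ≤ μ (ball (c j) (2 * r j)) / ENNReal.ofReal (r j) := by
      intro j
      by_cases hA' : (ball (c j) (r j) ∩ A).Nonempty
      · by_cases hB' : (ball (c j) (r j) ∩ B).Nonempty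
        · exfalso
          obtain ⟨a, haB, haA⟩ := hA'
          obtain ⟨b, hbB, hbB'⟩ := hB'
          have h1 : dist a (c j) < r j := mem_ball.1 haB
          have h2 : dist b (c j) < r j := mem_ball.1 hbB
          have h3 : Δ ≤ dist a b := hsep a haA b hbB'
          have h4 : dist a b ≤ dist a (c j) + dist b (c j) := dist_triangle_right a b (c j)
          linarith [hrR j]
        · rw [if_pos hA', if_neg hB', hzero j, add_zero]
      · rw [if_neg hA', hzero j, zero_add]
        by_cases hB' : (ball (c j) (r j) ∩ B).Nonempty
        · rw [if_pos hB']
        · rw [if_neg hB']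
          exact (hzero j).le.trans zero_le
    calc hatHContent μ R A + hatHContent μ R B
        ≤ _ + _ := add_le_add (hcont A (fun x hx => hcov (Or.inl hx)))
          (hcont B (fun x hx => hcov (Or.inr hx)))
      _ = ∑' j, (μ (ball (c j) (2 * (if (ball (c j) (r j) ∩ A).Nonempty then r j else 0))) /
            ENNReal.ofReal (if (ball (c j) (r j) ∩ A).Nonempty then r j else 0)
          + μ (ball (c j) (2 * (if (ball (c j) (r j) ∩ B).Nonempty then r j else 0))) /
            ENNReal.ofReal (if (ball (c j) (r j) ∩ B).Nonempty then r j else 0)) :=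
          (ENNReal.tsum_add).symm
      _ ≤ ∑' j, μ (ball (c j) (2 * r j)) / ENNReal.ofReal (r j) :=
          ENNReal.tsum_le_tsum hterm
  rw [hatH, hatH, hatH]
  refine ENNReal.biSup_add_biSup_le' (p := fun R : ℝ => 0 < R) (q := fun R : ℝ => 0 < R)
    ⟨1, one_pos⟩ ⟨1, one_pos⟩ ?_
  intro R₁ hR₁ R₂ hR₂
  have hR : 0 < min (min R₁ R₂) (Δ / 2) := lt_min (lt_min hR₁ hR₂) (by linarith)
  have h2R : 2 * min (min R₁ R₂) (Δ / 2) ≤ Δ := by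
    have : min (min R₁ R₂) (Δ / 2) ≤ Δ / 2 := min_le_right _ _
    linarith
  calc hatHContent μ R₁ A + hatHContent μ R₂ B
      ≤ hatHContent μ (min (min R₁ R₂) (Δ / 2)) A
        + hatHContent μ (min (min R₁ R₂) (Δ / 2)) B :=
        add_le_add (hatHContent_anti ((min_le_left _ _).trans (min_le_left _ _)))
          (hatHContent_anti ((min_le_left _ _).trans (min_le_right _ _)))
    _ ≤ hatHContent μ (min (min R₁ R₂) (Δ / 2)) (A ∪ B) := key _ hR h2R
    _ ≤ hatH μ (A ∪ B) := hatHContent_le_hatH hR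

end Aux2
section Aux3
set_option linter.unusedSectionVars false
set_option maxHeartbeats 1000000
variable {X : Type*} [MetricSpace X] {Y : Type*} [MetricSpace Y]

/-- The largest radius `r ∈ (0,1]` at which the oscillation of `f` on `Ω ∩ B(x,r)` is `≤ e`. -/
def oscR (Ω : Set X) (f : X → Y) (e : ℝ≥0∞) (x : X) : ℝ :=
  sSup {r : ℝ | r ∈ Set.Ioc (0:ℝ) 1 ∧ EMetric.diam (f '' (Ω ∩ ball x r)) ≤ e}

lemma oscR_nonneg (Ω : Set X) (f : X → Y) (e : ℝ≥0∞) (x : X) : 0 ≤ oscR Ω f e x :=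
  Real.sSup_nonneg (fun r hr => hr.1.1.le)

lemma oscR_bddAbove (Ω : Set X) (f : X → Y) (e : ℝ≥0∞) (x : X) :
    BddAbove {r : ℝ | r ∈ Set.Ioc (0:ℝ) 1 ∧ EMetric.diam (f '' (Ω ∩ ball x r)) ≤ e} :=
  ⟨1, fun r hr => hr.1.2⟩

lemma oscR_mem_of_le {Ω : Set X} {f : X → Y} {e : ℝ≥0∞} {x : X} {r r' : ℝ}
    (hr : r ∈ {r : ℝ | r ∈ Set.Ioc (0:ℝ) 1 ∧ EMetric.diam (f '' (Ω ∩ ball x r)) ≤ e})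
    (h0 : 0 < r') (hle : r' ≤ r) :
    r' ∈ {r : ℝ | r ∈ Set.Ioc (0:ℝ) 1 ∧ EMetric.diam (f '' (Ω ∩ ball x r)) ≤ e} := by
  refine ⟨⟨h0, hle.trans hr.1.2⟩, le_trans ?_ hr.2⟩
  exact EMetric.diam_mono (Set.image_mono (Set.inter_subset_inter_right _ (ball_subset_ball hle)))

lemma oscR_pos {Ω : Set X} {f : X → Y} (hcont : ContinuousOn f Ω) {e : ℝ≥0∞} (he : 0 < e)
    {x : X} (hx : x ∈ Ω) : 0 < oscR Ω f e x := by
  have hc : Tendsto f (nhdsWithin x Ω) (nhds (f x)) := hcont x hx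
  have hev : {y | edist (f y) (f x) < e / 2} ∈ nhdsWithin x Ω := by
    have := EMetric.tendsto_nhds.1 hc (e / 2) (ENNReal.half_pos he.ne')
    exact this
  obtain ⟨δ, hδ, hδsub⟩ := Metric.mem_nhdsWithin_iff.1 hev
  have hmem : min δ 1 ∈ {r : ℝ | r ∈ Set.Ioc (0:ℝ) 1 ∧
      EMetric.diam (f '' (Ω ∩ ball x r)) ≤ e} := by
    refine ⟨⟨lt_min hδ one_pos, min_le_right _ _⟩, ?_⟩
    refine EMetric.diam_le fun u hu v hv => ?_
    obtain ⟨u', hu', rfl⟩ := hu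
    obtain ⟨v', hv', rfl⟩ := hv
    have hu2 : edist (f u') (f x) < e / 2 := hδsub ⟨ball_subset_ball (min_le_left _ _) hu'.2, hu'.1⟩
    have hv2 : edist (f v') (f x) < e / 2 := hδsub ⟨ball_subset_ball (min_le_left _ _) hv'.2, hv'.1⟩
    calc edist (f u') (f v') ≤ edist (f u') (f x) + edist (f v') (f x) := edist_triangle_right _ _ _
    _ ≤ e / 2 + e / 2 := add_le_add hu2.le hv2.le
    _ = e := ENNReal.add_halves e
  exact lt_of_lt_of_le (lt_min hδ one_pos) (le_csSup (oscR_bddAbove Ω f e x) hmem)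

lemma oscR_le_add_dist (Ω : Set X) (f : X → Y) (e : ℝ≥0∞) (x y : X) :
    oscR Ω f e x ≤ oscR Ω f e y + dist x y := by
  rcases Set.eq_empty_or_nonempty {r : ℝ | r ∈ Set.Ioc (0:ℝ) 1 ∧
      EMetric.diam (f '' (Ω ∩ ball x r)) ≤ e} with hS | hS
  · rw [oscR, hS, Real.sSup_empty]
    have h1 := oscR_nonneg Ω f e y
    have h2 := dist_nonneg (x := x) (y := y)
    linarith
  · refine csSup_le hS fun r hr => ?_
    rcases le_or_gt r (dist x y) with h | h
    · have := oscR_nonneg Ω f e y; linarith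
    · have hmem : (r - dist x y) ∈ {r : ℝ | r ∈ Set.Ioc (0:ℝ) 1 ∧
          EMetric.diam (f '' (Ω ∩ ball y r)) ≤ e} := by
        refine ⟨⟨by linarith, by linarith [hr.1.2, dist_nonneg (x := x) (y := y)]⟩, ?_⟩
        refine le_trans (EMetric.diam_mono (Set.image_mono
          (Set.inter_subset_inter_right _ (ball_subset_ball' ?_)))) hr.2
        rw [dist_comm]; linarith
      have h5 := le_csSup (oscR_bddAbove Ω f e y) hmem
      rw [oscR]
      linarith

lemma diam_le_of_lt_oscR {Ω : Set X} {f : X → Y} {e : ℝ≥0∞} {x : X} {ρ : ℝ}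
    (hρ : 0 < ρ) (hρ2 : ρ < oscR Ω f e x) :
    EMetric.diam (f '' (Ω ∩ ball x ρ)) ≤ e := by
  have hS : {r : ℝ | r ∈ Set.Ioc (0:ℝ) 1 ∧ EMetric.diam (f '' (Ω ∩ ball x r)) ≤ e}.Nonempty := by
    by_contra h
    rw [Set.not_nonempty_iff_eq_empty] at h
    rw [oscR, h, Real.sSup_empty] at hρ2
    linarith
  obtain ⟨a, ha, hlt⟩ := exists_lt_of_lt_csSup hS hρ2
  exact (oscR_mem_of_le ha hρ hlt.le).2

end Aux3
section Aux4
set_option linter.unusedSectionVars false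
set_option maxHeartbeats 1000000
variable {X : Type*} [MetricSpace X]

lemma curve_contrib {γ : Curve X} {c : X} {r : ℝ} {x : X}
    (hx : x ∈ γ.image) (hxb : x ∈ ball c r) (hrlen : r ≤ γ.len) :
    (2 : ℝ≥0∞) ≤ ∫⁻ s in Set.Icc (0:ℝ) γ.len,
      (2 / ENNReal.ofReal r) * (ball c (2*r)).indicator (fun _ => (1:ℝ≥0∞)) (γ.toFun s) := by
  have hr : 0 < r := lt_of_le_of_lt dist_nonneg (mem_ball.1 hxb)
  obtain ⟨t₀, ht₀, rfl⟩ := hx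
  set I := Set.Icc (max (t₀ - r) 0) (min (t₀ + r) γ.len) with hI
  have hIsub : I ⊆ Set.Icc (0:ℝ) γ.len := fun u hu =>
    ⟨le_trans (le_max_right _ _) hu.1, le_trans hu.2 (min_le_right _ _)⟩
  have hmem : ∀ u ∈ I, γ.toFun u ∈ ball c (2*r) := by
    intro u hu
    have h1 : dist (γ.toFun u) (γ.toFun t₀) ≤ dist u t₀ := by
      have h := γ.lip.dist_le_mul u (hIsub hu) t₀ ht₀
      simpa using h
    have h2 : dist u t₀ ≤ r := by
      rw [Real.dist_eq, abs_le]
      simp only [hI, Set.mem_Icc] at hu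
      constructor
      · linarith [hu.1, le_max_left (t₀ - r) 0]
      · linarith [hu.2, min_le_left (t₀ + r) γ.len]
    have h3 : dist (γ.toFun t₀) c < r := mem_ball.1 hxb
    have : dist (γ.toFun u) c < 2*r := by
      calc dist (γ.toFun u) c ≤ dist (γ.toFun u) (γ.toFun t₀) + dist (γ.toFun t₀) c :=
        dist_triangle _ _ _
      _ < 2*r := by linarith
    exact mem_ball.2 this
  have hvol : ENNReal.ofReal r ≤ volume I := by
    rw [hI, Real.volume_Icc]
    refine ENNReal.ofReal_le_ofReal ?_
    have h0 : 0 ≤ t₀ := ht₀.1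
    have hl : t₀ ≤ γ.len := ht₀.2
    rcases le_total (t₀ + r) γ.len with h | h
    · rcases le_total (t₀ - r) 0 with h' | h'
      · rw [min_eq_left h, max_eq_right h']; linarith
      · rw [min_eq_left h, max_eq_left h']; linarith
    · rcases le_total (t₀ - r) 0 with h' | h'
      · rw [min_eq_right h, max_eq_right h']; linarith
      · rw [min_eq_right h, max_eq_left h']; linarith
  have hlow : ∀ᵐ u ∂(volume.restrict I), (2 / ENNReal.ofReal r) ≤
      (2 / ENNReal.ofReal r) * (ball c (2*r)).indicator (fun _ => (1:ℝ≥0∞)) (γ.toFun u) := by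
    refine (ae_restrict_iff' measurableSet_Icc).2 (Filter.Eventually.of_forall fun u hu => ?_)
    rw [Set.indicator_of_mem (hmem u hu), mul_one]
  calc (2:ℝ≥0∞) = (2 / ENNReal.ofReal r) * ENNReal.ofReal r := by
        rw [ENNReal.div_mul_cancel (by simpa using hr) ENNReal.ofReal_ne_top]
    _ ≤ (2 / ENNReal.ofReal r) * volume I := mul_le_mul_right hvol _
    _ = ∫⁻ _ in I, (2 / ENNReal.ofReal r) := by rw [setLIntegral_const, mul_comm]
    _ ≤ ∫⁻ u in I, (2 / ENNReal.ofReal r) *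
          (ball c (2*r)).indicator (fun _ => (1:ℝ≥0∞)) (γ.toFun u) := lintegral_mono_ae hlow
    _ ≤ ∫⁻ s in Set.Icc (0:ℝ) γ.len, (2 / ENNReal.ofReal r) *
          (ball c (2*r)).indicator (fun _ => (1:ℝ≥0∞)) (γ.toFun s) :=
        lintegral_mono' (Measure.restrict_mono hIsub le_rfl) le_rfl

end Aux4
section Aux5
set_option linter.unusedSectionVars false
set_option maxHeartbeats 2000000

/-- Hausdorff content at scale `b` (matching the inner infimum of
`MeasureTheory.hausdorffMeasure_apply` for `d = 1`). -/
def HC {Y : Type*} [MetricSpace Y] (b : ℝ≥0∞) (S : Set Y) : ℝ≥0∞ :=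
  ⨅ (t : ℕ → Set Y) (_ : S ⊆ ⋃ n, t n) (_ : ∀ n, EMetric.diam (t n) ≤ b),
    ∑' n, ⨆ _ : (t n).Nonempty, EMetric.diam (t n)

lemma HC_anti {Y : Type*} [MetricSpace Y] {b r : ℝ≥0∞} (h : b ≤ r) (S : Set Y) :
    HC r S ≤ HC b S := by
  refine le_iInf fun t => le_iInf fun hcov => le_iInf fun hd => ?_
  exact iInf_le_of_le t (iInf_le_of_le hcov
    (iInf_le_of_le (fun n => (hd n).trans h) le_rfl))

lemma ennreal_two_helper {x y : ℝ≥0∞} : (2 / x) * y = 2 * (y / x) := by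
  rw [div_eq_mul_inv, div_eq_mul_inv, mul_assoc, mul_comm x⁻¹ y]

lemma ennreal_div_mul_div_cancel {x y : ℝ≥0∞} (hx0 : x ≠ 0) (hxt : x ≠ ⊤)
    (hy0 : y ≠ 0) (hyt : y ≠ ⊤) : (x / y) * (y / x) = 1 := by
  rw [div_eq_mul_inv, div_eq_mul_inv, mul_mul_mul_comm, mul_comm y⁻¹ x⁻¹,
    ← ENNReal.mul_inv (Or.inl hx0) (Or.inr hy0),
    ENNReal.mul_inv_cancel (mul_ne_zero hx0 hy0) (ENNReal.mul_ne_top hxt hyt)]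

lemma ennreal_div_twice_mul_le {x y : ℝ≥0∞} (hy0 : y ≠ 0) (hyt : y ≠ ⊤) :
    x / (2 * y) * y ≤ x / 2 := by
  rw [div_eq_mul_inv, div_eq_mul_inv,
    ENNReal.mul_inv (Or.inl two_ne_zero) (Or.inl ENNReal.ofNat_ne_top),
    mul_assoc, mul_assoc, ENNReal.inv_mul_cancel hy0 hyt, mul_one]

variable {X Y : Type*} [MetricSpace X] [MeasurableSpace X] [BorelSpace X] [MetricSpace Y]

lemma core_mod1_zero (μ : Measure X) (Ω : Set X) (f : X → Y) (hcont : ContinuousOn f Ω)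
    (F : Set X) (hFΩ : F ⊆ Ω) (hFfin : hatH μ F < ⊤)
    (b δ : ℝ≥0∞) (hb : 0 < b) (hδ0 : 0 < δ) (hδtop : δ < ⊤) (L : ℝ) (hL : 0 < L) :
    Mod1 μ {γ : Curve X | γ.In Ω ∧ L ≤ γ.len ∧ δ < HC b (f '' (γ.image ∩ F))} = 0 := by
  classical
  refine Mod1_eq_zero_of_le_forall fun ε₁ hε₁ => ?_
  set ε : ℝ≥0∞ := min ε₁ 1 with hεdef
  have hε : 0 < ε := lt_min hε₁ one_pos
  have hεne : ε ≠ 0 := hε.ne'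
  have hεtop : ε ≠ ⊤ := (lt_of_le_of_lt (min_le_right _ _) (by norm_num)).ne
  refine le_trans ?_ (min_le_left ε₁ 1)
  set M' : ℝ≥0∞ := hatH μ F + 1 with hM'def
  have hM'0 : M' ≠ 0 := by simp [hM'def]
  have hM'top : M' ≠ ⊤ := by
    simp only [hM'def]
    exact ENNReal.add_ne_top.2 ⟨hFfin.ne, ENNReal.one_ne_top⟩
  have h2M'0 : (2:ℝ≥0∞) * M' ≠ 0 := by simp [hM'0]
  have h2M'top : (2:ℝ≥0∞) * M' ≠ ⊤ := ENNReal.mul_ne_top (by norm_num) hM'top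
  -- choose the small oscillation threshold e = ofReal ε₀
  set cb : ℝ≥0∞ := min b (δ * (ε / (4 * M'))) with hcbdef
  have hcb0 : cb ≠ 0 := by
    refine (lt_min hb ?_).ne'
    exact ENNReal.mul_pos hδ0.ne' (ENNReal.div_pos hεne
      (ENNReal.mul_ne_top (by norm_num) hM'top)).ne'
  have hcbtop : cb ≠ ⊤ := by
    refine ne_top_of_le_ne_top ?_ (min_le_right _ _)
    exact ENNReal.mul_ne_top hδtop.ne ((ENNReal.div_lt_top hεtop (by simp [hM'0])).ne)
  set ε₀ : ℝ := cb.toReal / 2 with hε₀def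
  have hε₀pos : 0 < ε₀ := by
    have := ENNReal.toReal_pos hcb0 hcbtop
    rw [hε₀def]; linarith
  set e : ℝ≥0∞ := ENNReal.ofReal ε₀ with hedef
  have he0 : e ≠ 0 := by simp [hedef, hε₀pos]
  have hetop : e ≠ ⊤ := ENNReal.ofReal_ne_top
  have hecb : e ≤ cb := by
    rw [hedef, hε₀def]
    calc ENNReal.ofReal (cb.toReal / 2) ≤ ENNReal.ofReal cb.toReal :=
      ENNReal.ofReal_le_ofReal (by linarith [ENNReal.toReal_nonneg (a := cb)])
    _ = cb := ENNReal.ofReal_toReal hcbtop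
  have heb : e ≤ b := hecb.trans (min_le_left _ _)
  -- the oscillation radius function and the bands
  set osc : X → ℝ := oscR Ω f e with hoscdef
  set D : ℕ → Set X := fun t => {x | x ∈ F ∧ ((t:ℝ) + 2)⁻¹ ≤ osc x ∧ osc x < ((t:ℝ) + 1)⁻¹}
    with hDdef
  have hDF : ∀ t, D t ⊆ F := fun t x hx => hx.1
  -- partial sums of even/odd bands are bounded by hatH F
  have claim : ∀ o, o ≤ 1 → ∀ T : ℕ,
      ∑ t ∈ Finset.range T, hatH μ (D (2*t+o)) ≤ hatH μ F := by
    intro o ho T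
    have main : ∑ t ∈ Finset.range T, hatH μ (D (2*t+o))
        ≤ hatH μ (⋃ t ∈ Finset.range T, D (2*t+o)) := by
      induction T with
      | zero => simp
      | succ T ih =>
        rcases Nat.eq_zero_or_pos T with rfl | hT
        · simp
        rw [Finset.sum_range_succ, Finset.range_add_one, Finset.set_biUnion_insert]
        have hA2 : (2:ℝ) ≤ ((2*T+o : ℕ) : ℝ) := by
          push_cast
          have h1 : (1:ℝ) ≤ (T:ℝ) := by exact_mod_cast hT
          have h2 : (0:ℝ) ≤ (o:ℝ) := Nat.cast_nonneg o
          linarith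
        set A : ℝ := ((2*T+o : ℕ) : ℝ) with hA
        have hΔpos : 0 < A⁻¹ - (A+1)⁻¹ := by
          have h1 : (A+1)⁻¹ < A⁻¹ := by
            apply inv_strictAnti₀ <;> linarith
          linarith
        have hsep : ∀ x ∈ (⋃ t ∈ Finset.range T, D (2*t+o)), ∀ a ∈ D (2*T+o),
            A⁻¹ - (A+1)⁻¹ ≤ dist x a := by
          intro x hx a ha
          simp only [Set.mem_iUnion, exists_prop] at hx
          obtain ⟨t, ht, hxt⟩ := hx
          have htT : t < T := Finset.mem_range.1 ht
          have h1 : A⁻¹ ≤ osc x := by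
            refine le_trans (inv_anti₀ ?_ ?_) hxt.2.1
            · positivity
            · rw [hA]; push_cast
              have : (t:ℝ) + 1 ≤ (T:ℝ) := by exact_mod_cast htT
              linarith
          have h2 : osc a < (A+1)⁻¹ := by
            refine lt_of_lt_of_le ha.2.2 (le_of_eq ?_)
            rw [hA]
          have h3 : osc x ≤ osc a + dist x a := oscR_le_add_dist Ω f e x a
          linarith
        calc ∑ t ∈ Finset.range T, hatH μ (D (2*t+o)) + hatH μ (D (2*T+o))
            ≤ hatH μ (⋃ t ∈ Finset.range T, D (2*t+o)) + hatH μ (D (2*T+o)) :=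
              add_le_add_left ih _
          _ ≤ hatH μ ((⋃ t ∈ Finset.range T, D (2*t+o)) ∪ D (2*T+o)) :=
              hatH_superadd hΔpos hsep
          _ = hatH μ (D (2*T+o) ∪ ⋃ t ∈ Finset.range T, D (2*t+o)) := by
              rw [Set.union_comm]
    exact main.trans (hatH_mono (Set.iUnion₂_subset fun t _ => hDF _))
  have htot : ∑' t, hatH μ (D t) ≤ 2 * hatH μ F := by
    rw [← tsum_even_add_odd (f := fun t => hatH μ (D t)) ENNReal.summable ENNReal.summable,
      two_mul]
    refine add_le_add ?_ ?_
    · refine ENNReal.tsum_le_of_sum_range_le fun n => ?_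
      simpa using claim 0 (by norm_num) n
    · exact ENNReal.tsum_le_of_sum_range_le fun n => claim 1 le_rfl n
  have htotne : ∑' t, hatH μ (D t) ≠ ⊤ :=
    (lt_of_le_of_lt htot (ENNReal.mul_lt_top (by norm_num) hFfin)).ne
  -- choose s with small tail
  have htail := ENNReal.tendsto_sum_nat_add (fun t => hatH μ (D t)) htotne
  have hε8 : (0:ℝ≥0∞) < ε / 8 := ENNReal.div_pos hεne (by norm_num)
  obtain ⟨s, hs1, hstail⟩ : ∃ s : ℕ, 1 ≤ s ∧ ∑' k, hatH μ (D (k + s)) ≤ ε / 8 := by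
    have hev := (htail.eventually_lt_const hε8).and (Filter.eventually_ge_atTop 1)
    obtain ⟨s, hs⟩ := hev.exists
    exact ⟨s, hs.2, hs.1.le⟩
  -- the good set
  set Fs : Set X := {x | x ∈ F ∧ ((s:ℝ) + 1)⁻¹ ≤ osc x} with hFsdef
  have hFsplit : ∀ x ∈ F, x ∉ Fs → ∃ i, x ∈ D (i + s) := by
    intro x hxF hxFs
    have hosc : 0 < osc x := oscR_pos hcont (pos_iff_ne_zero.2 he0) (hFΩ hxF)
    have hlt : osc x < ((s:ℝ) + 1)⁻¹ := by
      by_contra h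
      exact hxFs ⟨hxF, le_of_not_gt h⟩
    have hex : ∃ t : ℕ, ((t:ℝ) + 2)⁻¹ ≤ osc x := by
      obtain ⟨n, hn⟩ := exists_nat_gt (osc x)⁻¹
      refine ⟨n, ?_⟩
      rw [inv_le_comm₀ (by positivity) hosc]
      calc (osc x)⁻¹ ≤ (n:ℝ) := hn.le
      _ ≤ (n:ℝ) + 2 := by linarith
    have hft : ((Nat.find hex:ℝ) + 2)⁻¹ ≤ osc x := Nat.find_spec hex
    have hts : s ≤ Nat.find hex := by
      by_contra h
      push_neg at h
      have hle : ((s:ℝ) + 1)⁻¹ ≤ ((Nat.find hex:ℝ) + 2)⁻¹ := by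
        refine inv_anti₀ (by positivity) ?_
        have : (Nat.find hex:ℝ) + 1 ≤ (s:ℝ) := by exact_mod_cast h
        linarith
      linarith
    have h1find : 1 ≤ Nat.find hex := le_trans hs1 hts
    have hup : osc x < ((Nat.find hex:ℝ) + 1)⁻¹ := by
      have h2 := Nat.find_min hex (m := Nat.find hex - 1) (by omega)
      push_neg at h2
      have h3 : ((Nat.find hex - 1 : ℕ):ℝ) + 2 = (Nat.find hex:ℝ) + 1 := by
        rw [Nat.cast_sub h1find]
        ring
      rw [h3] at h2
      exact h2
    refine ⟨Nat.find hex - s, ?_⟩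
    rw [Nat.sub_add_cancel hts]
    exact ⟨hxF, hft, hup⟩
  -- scale R
  set R : ℝ := min L ((4*((s:ℝ)+1))⁻¹) with hRdef
  have hR0 : 0 < R := lt_min hL (by positivity)
  have hRL : R ≤ L := min_le_left _ _
  have hRs : R ≤ (4*((s:ℝ)+1))⁻¹ := min_le_right _ _
  -- cover of Fs
  have hFsF : Fs ⊆ F := fun x hx => hx.1
  have hcontent1 : hatHContent μ R Fs < M' := by
    calc hatHContent μ R Fs ≤ hatH μ Fs := hatHContent_le_hatH hR0
    _ ≤ hatH μ F := hatH_mono hFsF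
    _ < M' := by rw [hM'def]; exact ENNReal.lt_add_right hFfin.ne one_ne_zero
  obtain ⟨c1, r1, hr1R, hcov1, hsum1⟩ := exists_cover_of_hatHContent_lt hcontent1
  -- covers of the bands D (i+s)
  obtain ⟨η, hηpos, hηsum⟩ := ENNReal.exists_pos_sum_of_countable' hε8.ne' ℕ
  have hcontent2 : ∀ i : ℕ, hatHContent μ R (D (i + s)) < hatH μ (D (i + s)) + η i := by
    intro i
    calc hatHContent μ R (D (i+s)) ≤ hatH μ (D (i+s)) := hatHContent_le_hatH hR0
    _ < hatH μ (D (i+s)) + η i :=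
      ENNReal.lt_add_right (ne_top_of_le_ne_top hFfin.ne (hatH_mono (hDF _))) (hηpos i).ne'
  choose c2 r2 hr2R hcov2 hsum2 using fun i => exists_cover_of_hatHContent_lt (hcontent2 i)
  -- the admissible function
  set S1 : X → ℝ≥0∞ := fun x => ∑' j, (2 / ENNReal.ofReal (r1 j)) *
    (ball (c1 j) (2 * r1 j)).indicator (fun _ => (1:ℝ≥0∞)) x with hS1def
  set S2 : X → ℝ≥0∞ := fun x => ∑' p : ℕ × ℕ, (2 / ENNReal.ofReal (r2 p.1 p.2)) *
    (ball (c2 p.1 p.2) (2 * r2 p.1 p.2)).indicator (fun _ => (1:ℝ≥0∞)) x with hS2def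
  set aa : ℝ≥0∞ := e / δ with haadef
  have haatop : aa ≠ ⊤ := (ENNReal.div_lt_top hetop hδ0.ne').ne
  set ρ : X → ℝ≥0∞ := fun x => aa * S1 x + S2 x with hρdef
  have hmS1 : Measurable S1 :=
    Measurable.ennreal_tsum fun j =>
      (measurable_const.indicator measurableSet_ball).const_mul _
  have hmS2 : Measurable S2 :=
    Measurable.ennreal_tsum fun p =>
      (measurable_const.indicator measurableSet_ball).const_mul _
  have hmρ : Measurable ρ := (hmS1.const_mul _).add hmS2
  -- integral of a single bump
  have hbump : ∀ (c : X) (r : ℝ),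
      ∫⁻ x, (2 / ENNReal.ofReal r) * (ball c (2 * r)).indicator (fun _ => (1:ℝ≥0∞)) x ∂μ
        = 2 * (μ (ball c (2 * r)) / ENNReal.ofReal r) := by
    intro c r
    rw [lintegral_const_mul _ (measurable_const.indicator measurableSet_ball)]
    rw [lintegral_indicator measurableSet_ball]
    simp only [lintegral_const, one_mul, Measure.restrict_apply MeasurableSet.univ,
      Set.univ_inter]
    exact ennreal_two_helper
  -- total mass of ρ
  have hmass : ∫⁻ x, ρ x ∂μ ≤ ε := by
    have hint1 : ∫⁻ x, S1 x ∂μ ≤ 2 * M' := by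
      rw [hS1def]
      rw [lintegral_tsum fun j =>
        ((measurable_const.indicator measurableSet_ball).const_mul _).aemeasurable]
      calc ∑' j, ∫⁻ x, (2 / ENNReal.ofReal (r1 j)) *
            (ball (c1 j) (2 * r1 j)).indicator (fun _ => (1:ℝ≥0∞)) x ∂μ
          = ∑' j, 2 * (μ (ball (c1 j) (2 * r1 j)) / ENNReal.ofReal (r1 j)) :=
            tsum_congr fun j => hbump _ _
        _ = 2 * ∑' j, μ (ball (c1 j) (2 * r1 j)) / ENNReal.ofReal (r1 j) :=
            ENNReal.tsum_mul_left
        _ ≤ 2 * M' := mul_le_mul_right hsum1.le _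
    have hint2 : ∫⁻ x, S2 x ∂μ ≤ ε / 2 := by
      rw [hS2def]
      rw [lintegral_tsum fun p =>
        ((measurable_const.indicator measurableSet_ball).const_mul _).aemeasurable]
      have hcalc : ∑' (p : ℕ × ℕ), ∫⁻ x, (2 / ENNReal.ofReal (r2 p.1 p.2)) *
            (ball (c2 p.1 p.2) (2 * r2 p.1 p.2)).indicator (fun _ => (1:ℝ≥0∞)) x ∂μ
          = 2 * ∑' (p : ℕ × ℕ), μ (ball (c2 p.1 p.2) (2 * r2 p.1 p.2)) /
              ENNReal.ofReal (r2 p.1 p.2) := by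
        rw [← ENNReal.tsum_mul_left]
        exact tsum_congr fun p => hbump _ _
      have hre : ∑' (p : ℕ × ℕ), μ (ball (c2 p.1 p.2) (2 * r2 p.1 p.2)) /
            ENNReal.ofReal (r2 p.1 p.2)
          = ∑' (i : ℕ), ∑' (j : ℕ), μ (ball (c2 i j) (2 * r2 i j)) /
              ENNReal.ofReal (r2 i j) :=
        ENNReal.tsum_prod' (f := fun p => μ (ball (c2 p.1 p.2) (2 * r2 p.1 p.2)) /
          ENNReal.ofReal (r2 p.1 p.2))
      rw [hcalc, hre]
      have hsum : ∑' (i : ℕ) (j : ℕ), μ (ball (c2 i j) (2 * r2 i j)) /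
          ENNReal.ofReal (r2 i j) ≤ ε / 8 + ε / 8 := by
        calc ∑' (i : ℕ) (j : ℕ), μ (ball (c2 i j) (2 * r2 i j)) / ENNReal.ofReal (r2 i j)
            ≤ ∑' (i : ℕ), (hatH μ (D (i + s)) + η i) :=
              ENNReal.tsum_le_tsum fun i => (hsum2 i).le
          _ = (∑' i, hatH μ (D (i + s))) + ∑' i, η i := ENNReal.tsum_add
          _ ≤ ε / 8 + ε / 8 := add_le_add hstail hηsum.le
      calc 2 * ∑' (i : ℕ) (j : ℕ), μ (ball (c2 i j) (2 * r2 i j)) /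
            ENNReal.ofReal (r2 i j) ≤ 2 * (ε / 8 + ε / 8) := mul_le_mul_right hsum _
        _ = ε / 2 := by
          rw [ENNReal.div_add_div_same, ← two_mul, ← mul_div_assoc, ← mul_assoc,
            show (2:ℝ≥0∞) * 2 = 4 from by norm_num,
            show (8:ℝ≥0∞) = 4 * 2 from by norm_num,
            ENNReal.mul_div_mul_left _ _ (by norm_num) (by norm_num)]
    have hbudget : aa * (2 * M') ≤ ε / 2 := by
      have h1 : aa ≤ ε / (4 * M') := by
        rw [haadef]
        calc e / δ ≤ (δ * (ε / (4 * M'))) / δ :=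
          ENNReal.div_le_div_right (hecb.trans (min_le_right _ _)) δ
        _ = ε / (4 * M') := by
          rw [mul_comm, mul_div_assoc, ENNReal.div_self hδ0.ne' hδtop.ne, mul_one]
      calc aa * (2 * M') ≤ (ε / (4 * M')) * (2 * M') := mul_le_mul_left h1 _
      _ = ε / (2 * (2 * M')) * (2 * M') := by
        rw [show (4:ℝ≥0∞) * M' = 2 * (2 * M') by rw [← mul_assoc]; norm_num]
      _ ≤ ε / 2 := ennreal_div_twice_mul_le h2M'0 h2M'top
    calc ∫⁻ x, ρ x ∂μ = ∫⁻ x, aa * S1 x + S2 x ∂μ := rfl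
      _ = aa * ∫⁻ x, S1 x ∂μ + ∫⁻ x, S2 x ∂μ := by
        rw [lintegral_add_left ((hmS1.const_mul _)), lintegral_const_mul _ hmS1]
      _ ≤ ε / 2 + ε / 2 := add_le_add
          (le_trans (mul_le_mul_right hint1 _) hbudget) hint2
      _ = ε := ENNReal.add_halves ε
  -- admissibility
  have hadm : ∀ γ ∈ {γ : Curve X | γ.In Ω ∧ L ≤ γ.len ∧ δ < HC b (f '' (γ.image ∩ F))},
      1 ≤ γ.integral ρ := by
    rintro γ ⟨hIn, hLlen, hδγ⟩
    have hγae : AEMeasurable γ.toFun (volume.restrict (Set.Icc (0:ℝ) γ.len)) :=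
      (γ.lip.continuousOn).aemeasurable measurableSet_Icc
    by_cases hcase : (γ.image ∩ (F \ Fs)).Nonempty
    · -- Case A: the curve meets F ∖ Fs, which is covered by the band covers
      obtain ⟨x, hxγ, hxF, hxFs⟩ := hcase
      obtain ⟨i, hxD⟩ := hFsplit x hxF hxFs
      obtain ⟨j, hj⟩ := Set.mem_iUnion.1 (hcov2 i hxD)
      have hrlen : r2 i j ≤ γ.len := le_trans (le_trans (hr2R i j) hRL) hLlen
      have h2 : (2:ℝ≥0∞) ≤ γ.integral ρ := by
        refine le_trans (curve_contrib hxγ hj hrlen) (lintegral_mono fun u => ?_)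
        rw [hρdef]
        refine le_add_of_nonneg_of_le zero_le ?_
        rw [hS2def]
        exact ENNReal.le_tsum (i, j)
      exact le_trans (by norm_num) h2
    · -- Case B: γ.image ∩ F ⊆ Fs
      have himg : γ.image ∩ F ⊆ Fs := by
        intro x hx
        by_contra hxFs
        exact hcase ⟨x, hx.1, hx.2, hxFs⟩
      set T : Set ℕ := {j | (γ.image ∩ F ∩ ball (c1 j) (r1 j)).Nonempty} with hTdef
      set t : ℕ → Set Y := fun j => f '' (γ.image ∩ F ∩ ball (c1 j) (r1 j)) with htdef
      have hcover : f '' (γ.image ∩ F) ⊆ ⋃ j, t j := by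
        rintro y ⟨x, hx, rfl⟩
        obtain ⟨j, hj⟩ := Set.mem_iUnion.1 (hcov1 (himg hx))
        exact Set.mem_iUnion.2 ⟨j, Set.mem_image_of_mem f ⟨hx, hj⟩⟩
      have hdiamT : ∀ j ∈ T, EMetric.diam (t j) ≤ e := by
        intro j hj
        obtain ⟨z, hz⟩ := hj
        have hzFs : z ∈ Fs := himg ⟨hz.1.1, hz.1.2⟩
        have hzosc : ((s:ℝ) + 1)⁻¹ ≤ osc z := hzFs.2
        have hrr : (0:ℝ) < (2*((s:ℝ)+1))⁻¹ := by positivity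
        have hrrosc : (2*((s:ℝ)+1))⁻¹ < osc z := by
          refine lt_of_lt_of_le ?_ hzosc
          refine inv_strictAnti₀ (by positivity) (by linarith [Nat.cast_nonneg (α := ℝ) s])
        rw [hoscdef] at hrrosc
        have hdiam2 := diam_le_of_lt_oscR (Ω := Ω) (f := f) (e := e) hrr hrrosc
        refine le_trans (EMetric.diam_mono ?_) hdiam2
        rintro y ⟨u, hu, rfl⟩
        refine Set.mem_image_of_mem f ⟨hIn hu.1.1, ?_⟩
        have h1 : dist u (c1 j) < r1 j := mem_ball.1 hu.2
        have h2 : dist z (c1 j) < r1 j := mem_ball.1 hz.2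
        have h3 : r1 j ≤ R := hr1R j
        have h4 : dist u z ≤ dist u (c1 j) + dist z (c1 j) := dist_triangle_right u z (c1 j)
        rw [mem_ball]
        have h5 : (2:ℝ) * R ≤ (2*((s:ℝ)+1))⁻¹ := by
          have h6 : (2:ℝ) * (4*((s:ℝ)+1))⁻¹ = (2*((s:ℝ)+1))⁻¹ := by
            rw [show (4:ℝ)*((s:ℝ)+1) = 2*(2*((s:ℝ)+1)) by ring]
            rw [mul_inv]
            field_simp
          calc (2:ℝ) * R ≤ 2 * (4*((s:ℝ)+1))⁻¹ := by linarith [hRs]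
          _ = (2*((s:ℝ)+1))⁻¹ := h6
        linarith
      have hempty : ∀ j, j ∉ T → t j = ∅ := by
        intro j hj
        have hemp : γ.image ∩ F ∩ ball (c1 j) (r1 j) = ∅ :=
          Set.not_nonempty_iff_eq_empty.1 (fun h => hj h)
        show f '' (γ.image ∩ F ∩ ball (c1 j) (r1 j)) = ∅
        rw [hemp, Set.image_empty]
      set cardT : ℝ≥0∞ := ∑' j, T.indicator (fun _ => (1:ℝ≥0∞)) j with hcarddef
      have hHCle : HC b (f '' (γ.image ∩ F)) ≤ e * cardT := by
        have h1 : HC b (f '' (γ.image ∩ F)) ≤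
            ∑' j, ⨆ _ : (t j).Nonempty, EMetric.diam (t j) := by
          refine iInf_le_of_le t (iInf_le_of_le hcover (iInf_le_of_le ?_ le_rfl))
          intro j
          by_cases hj : j ∈ T
          · exact (hdiamT j hj).trans heb
          · rw [hempty j hj]; exact (le_of_eq Metric.ediam_empty).trans zero_le
        refine h1.trans ?_
        have h2 : ∀ j, (⨆ _ : (t j).Nonempty, EMetric.diam (t j)) ≤
            T.indicator (fun _ => e) j := by
          intro j
          by_cases hj : j ∈ T
          · rw [Set.indicator_of_mem hj]
            exact iSup_le fun _ => hdiamT j hj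
          · rw [hempty j hj]
            simp
        refine (ENNReal.tsum_le_tsum h2).trans (le_of_eq ?_)
        rw [hcarddef, ← ENNReal.tsum_mul_left]
        refine tsum_congr fun j => ?_
        by_cases hj : j ∈ T <;> simp [Set.indicator_apply, hj]
      have hcard : δ / e ≤ cardT := by
        rw [ENNReal.div_le_iff_le_mul (Or.inl he0) (Or.inl hetop)]
        rw [mul_comm]
        exact (hδγ.trans_le hHCle).le
      -- lower bound for the curve integral
      have hlow : aa * (2 * cardT) ≤ γ.integral ρ := by
        have hS1low : 2 * cardT ≤ ∫⁻ u in Set.Icc (0:ℝ) γ.len, S1 (γ.toFun u) := by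
          have heq : ∫⁻ u in Set.Icc (0:ℝ) γ.len, S1 (γ.toFun u)
              = ∑' j, ∫⁻ u in Set.Icc (0:ℝ) γ.len, (2 / ENNReal.ofReal (r1 j)) *
                  (ball (c1 j) (2 * r1 j)).indicator (fun _ => (1:ℝ≥0∞)) (γ.toFun u) := by
            rw [hS1def]
            exact lintegral_tsum fun j =>
              (((measurable_const.indicator measurableSet_ball).const_mul _)).comp_aemeasurable
                hγae
          rw [heq, hcarddef, ← ENNReal.tsum_mul_left]
          refine ENNReal.tsum_le_tsum fun j => ?_
          by_cases hj : j ∈ T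
          · obtain ⟨x, hx⟩ := id hj
            rw [Set.indicator_of_mem hj, mul_one]
            exact curve_contrib hx.1.1 hx.2 (le_trans (le_trans (hr1R j) hRL) hLlen)
          · rw [Set.indicator_of_notMem hj, mul_zero]
            exact zero_le
        calc aa * (2 * cardT) ≤ aa * ∫⁻ u in Set.Icc (0:ℝ) γ.len, S1 (γ.toFun u) :=
            mul_le_mul_right hS1low _
        _ = ∫⁻ u in Set.Icc (0:ℝ) γ.len, aa * S1 (γ.toFun u) :=
            (lintegral_const_mul' _ _ haatop).symm
        _ ≤ γ.integral ρ := lintegral_mono fun u => le_self_add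
      have hfinal : (2:ℝ≥0∞) ≤ aa * (2 * cardT) := by
        have hid : (2:ℝ≥0∞) = aa * (2 * (δ / e)) := by
          rw [haadef, mul_comm (2:ℝ≥0∞) (δ / e), ← mul_assoc,
            ennreal_div_mul_div_cancel he0 hetop hδ0.ne' hδtop.ne, one_mul]
        exact le_trans (le_of_eq hid) (mul_le_mul_right (mul_le_mul_right hcard _) _)
      exact le_trans (by norm_num) (hfinal.trans hlow)
  exact le_trans (Mod1_le_of_admissible hmρ hadm) hmass

end Aux5
section Main
set_option linter.unusedSectionVars false
set_option maxHeartbeats 2000000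

theorem exceptional_set_modulus_zero'
    {X Y : Type*} [MetricSpace X] [MeasurableSpace X] [BorelSpace X]
    [MetricSpace Y] [MeasurableSpace Y] [BorelSpace Y]
    (μ : Measure X) (ν : Measure Y)
    (hμfin : FiniteOnBalls μ) (hνfin : FiniteOnBalls ν)
    (Ω : Set X) (hΩopen : IsOpen Ω)
    (f : X → Y) (hcont : ContinuousOn f Ω)
    (E E₁ E₂ : Set X) (hEdecomp : E = E₁ ∪ E₂) (hEsub : E ⊆ Ω)
    (hE₁ : E₁.Countable)
    (hE₂ : SigmaFiniteSet (hatH μ) E₂) :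
    Mod1 μ {γ : Curve X | γ.In Ω ∧ 0 < μH[1] (f '' (γ.image ∩ E))} = 0 := by
  classical
  obtain ⟨Ei, hEi_cov, hEi_fin⟩ := hE₂
  haveI : NullSingletonClass (μH[1] : Measure Y) := MeasureTheory.Measure.nullSingletonClass_hausdorff Y one_pos
  have hE₂Ω : E₂ ⊆ Ω := fun x hx => hEsub (hEdecomp ▸ Set.mem_union_right _ hx)
  set Γi : ℕ × ℕ × ℕ × ℕ → Set (Curve X) := fun p =>
    {γ : Curve X | γ.In Ω ∧ 1/((p.2.2.2:ℝ)+1) ≤ γ.len ∧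
      (((p.2.1:ℕ):ℝ≥0∞) + 1)⁻¹ <
        HC (((p.2.2.1:ℕ):ℝ≥0∞) + 1)⁻¹ (f '' (γ.image ∩ (E₂ ∩ Ei p.1)))} with hΓidef
  refine Mod1_zero_of_subset_iUnion (Γi := Γi) ?_ ?_
  · -- inclusion
    rintro γ ⟨hIn, hpos⟩
    -- the curve has positive length
    have hlen : 0 < γ.len := by
      rcases lt_or_eq_of_le γ.len_nonneg with h | h
      · exact h
      · exfalso
        have himg : γ.image = {γ.toFun 0} := by
          rw [Curve.image, ← h, Set.Icc_self, Set.image_singleton]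
        have hsub : f '' (γ.image ∩ E) ⊆ {f (γ.toFun 0)} := by
          rw [himg]
          rintro y ⟨x, ⟨hx1, _⟩, rfl⟩
          rw [Set.mem_singleton_iff.1 hx1]
          rfl
        have : μH[1] (f '' (γ.image ∩ E)) = 0 :=
          le_antisymm (le_trans (measure_mono hsub) (measure_singleton _).le) zero_le
        rw [this] at hpos
        exact lt_irrefl _ hpos
    obtain ⟨n, hn⟩ := exists_nat_one_div_lt hlen
    -- find a piece of E₂ with positive measure of the image
    have hcover : γ.image ∩ E ⊆ (γ.image ∩ E₁) ∪ ⋃ i, (γ.image ∩ (E₂ ∩ Ei i)) := by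
      rintro x ⟨hxγ, hxE⟩
      rw [hEdecomp] at hxE
      rcases hxE with h | h
      · exact Or.inl ⟨hxγ, h⟩
      · obtain ⟨i, hi⟩ := Set.mem_iUnion.1 (hEi_cov h)
        exact Or.inr (Set.mem_iUnion.2 ⟨i, hxγ, h, hi⟩)
    have hmeas : μH[1] (f '' (γ.image ∩ E)) ≤
        ∑' i, μH[1] (f '' (γ.image ∩ (E₂ ∩ Ei i))) := by
      calc μH[1] (f '' (γ.image ∩ E))
          ≤ μH[1] (f '' ((γ.image ∩ E₁) ∪ ⋃ i, (γ.image ∩ (E₂ ∩ Ei i)))) :=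
            measure_mono (Set.image_mono hcover)
        _ = μH[1] (f '' (γ.image ∩ E₁) ∪ ⋃ i, f '' (γ.image ∩ (E₂ ∩ Ei i))) := by
            rw [Set.image_union, Set.image_iUnion]
        _ ≤ μH[1] (f '' (γ.image ∩ E₁)) + μH[1] (⋃ i, f '' (γ.image ∩ (E₂ ∩ Ei i))) :=
            measure_union_le _ _
        _ ≤ 0 + ∑' i, μH[1] (f '' (γ.image ∩ (E₂ ∩ Ei i))) := by
            refine add_le_add ?_ (measure_iUnion_le _)
            refine le_of_eq (Set.Countable.measure_zero ?_ _)
            exact ((hE₁.mono Set.inter_subset_right).image f)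
        _ = ∑' i, μH[1] (f '' (γ.image ∩ (E₂ ∩ Ei i))) := zero_add _
    have hex_i : ∃ i, 0 < μH[1] (f '' (γ.image ∩ (E₂ ∩ Ei i))) := by
      by_contra h
      push_neg at h
      have : ∑' i, μH[1] (f '' (γ.image ∩ (E₂ ∩ Ei i))) = 0 :=
        ENNReal.tsum_eq_zero.2 fun i => le_antisymm (h i) zero_le
      rw [this] at hmeas
      exact lt_irrefl _ (lt_of_lt_of_le hpos hmeas)
    obtain ⟨i, hi⟩ := hex_i
    set S : Set Y := f '' (γ.image ∩ (E₂ ∩ Ei i)) with hSdef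
    -- find q
    obtain ⟨q, hq⟩ := ENNReal.exists_inv_nat_lt hi.ne'
    have hq1 : (((q:ℕ):ℝ≥0∞) + 1)⁻¹ < μH[1] S := by
      refine lt_of_le_of_lt ?_ hq
      exact ENNReal.inv_le_inv.2 le_self_add
    -- find the content scale k
    have happ := MeasureTheory.Measure.hausdorffMeasure_apply 1 S
    simp only [ENNReal.rpow_one] at happ
    rw [happ] at hq1
    rw [lt_iSup_iff] at hq1
    obtain ⟨r, hr⟩ := hq1
    rw [lt_iSup_iff] at hr
    obtain ⟨hr0, hr⟩ := hr
    obtain ⟨k, hk⟩ := ENNReal.exists_inv_nat_lt hr0.ne'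
    have hkr : (((k:ℕ):ℝ≥0∞) + 1)⁻¹ ≤ r :=
      le_trans (ENNReal.inv_le_inv.2 le_self_add) hk.le
    have hfin : (((q:ℕ):ℝ≥0∞) + 1)⁻¹ < HC (((k:ℕ):ℝ≥0∞) + 1)⁻¹ S := by
      refine lt_of_lt_of_le hr ?_
      exact HC_anti hkr S
    exact Set.mem_iUnion.2 ⟨(i, q, k, n), hIn, hn.le, hfin⟩
  · -- each piece has zero modulus
    rintro ⟨i, q, k, n⟩
    refine core_mod1_zero μ Ω f hcont (E₂ ∩ Ei i)
      (fun x hx => hE₂Ω hx.1)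
      (lt_of_le_of_lt (hatH_mono Set.inter_subset_right) (hEi_fin i))
      _ _ ?_ ?_ ?_ _ ?_
    · exact ENNReal.inv_pos.2 (by simp)
    · exact ENNReal.inv_pos.2 (by simp)
    · exact ENNReal.inv_lt_top.2 (lt_of_lt_of_le zero_lt_one le_add_self)
    · positivity
end Main
/-- Proposition 5.3: if `f : Ω → Y` is continuous and `E = E₁ ∪ E₂ ⊆ Ω` where `E₁` is at
most countable and `E₂` has σ-finite `Ĥ`-measure, then the family of curves in `Ω` along
which `f(γ ∩ E)` has positive `H¹`-measure has zero 1-modulus. -/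
theorem exceptional_set_modulus_zero
    {X Y : Type*} [MetricSpace X] [MeasurableSpace X] [BorelSpace X]
    [MetricSpace Y] [MeasurableSpace Y] [BorelSpace Y]
    (μ : Measure X) (ν : Measure Y)
    (hμfin : FiniteOnBalls μ) (hνfin : FiniteOnBalls ν)
    (Ω : Set X) (hΩopen : IsOpen Ω)
    (f : X → Y) (hcont : ContinuousOn f Ω)
    (E E₁ E₂ : Set X) (hEdecomp : E = E₁ ∪ E₂) (hEsub : E ⊆ Ω)
    (hE₁ : E₁.Countable)
    (hE₂ : SigmaFiniteSet (hatH μ) E₂) :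
    Mod1 μ {γ : Curve X | γ.In Ω ∧ 0 < μH[1] (f '' (γ.image ∩ E))} = 0 := by
  exact exceptional_set_modulus_zero' μ ν hμfin hνfin Ω hΩopen f hcont E E₁ E₂ hEdecomp hEsub hE₁ hE₂
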